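/- arXiv:1004.2589 — 2 statements merged into one kernel-verified Lean document; each statement's English description precedes it below -/
import Mathlib

section
/- For every N ≥ 2, the intersection of the eigenspace of H0 for the eigenvalue N − 1 with the +1-eigenspace of the parity operator M is the one-dimensional span of the GHZ state ψ_d^(1) = (e(const false) + e(const true))/√2, and its intersection with the −1-eigenspace of M is the one-dimensional span of ψ_d^(2) = (e(const false) − e(const true))/√2. Precisely: {v | H0.mulVec v = (N−1) • v ∧ M.mulVec v = v} = Submodule.span ℂ {ψ_d^(1)} and {v | H0.mulVec v = (N−1) • v ∧ M.mulVec v = −v} = Submodule.span ℂ {ψ_d^(2)}. -/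
/-!
`H0` is diagonal in the basis of bit strings, with entry `∑ₙ spin (s n) * spin (s (n + 1))` at
`s`. Each bond contributes at most `1`, so the entry reaches `N - 1` exactly when all neighbouring
bits agree, i.e. when `s` is constant. The eigenspace of `N - 1` is therefore spanned by
`e (const false)` and `e (const true)`, which `M` exchanges, so it meets the `σ`-eigenspace of `M`
(`σ = ±1`) in the line through `e (const false) + σ • e (const true)`.
-/

open Matrix

/-- `Z n`: the Pauli-Z operator acting on site `n` of the chain. -/
noncomputable def Zop (N : ℕ) (n : Fin N) : Matrix (Fin N → Bool) (Fin N → Bool) ℂ :=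
  Matrix.diagonal fun s => if s n = false then 1 else -1

/-- The nearest-neighbour Ising Hamiltonian `H0 = ∑_{n=0}^{N-2} Z_n Z_{n+1}`. -/
noncomputable def IsingH0 (N : ℕ) : Matrix (Fin N → Bool) (Fin N → Bool) ℂ :=
  ∑ n ∈ (Finset.range (N - 1)).attach,
    Zop N ⟨n.1, by have := Finset.mem_range.mp n.2; omega⟩ *
    Zop N ⟨n.1 + 1, by have := Finset.mem_range.mp n.2; omega⟩

/-- The X-parity operator `M = ∏_n X_n`, the global spin flip. -/
noncomputable def parityM (N : ℕ) : Matrix (Fin N → Bool) (Fin N → Bool) ℂ :=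
  Matrix.of fun s t => if t = (fun n => !(s n)) then 1 else 0

/-- The standard basis vector at the bit string `s`. -/
noncomputable def e {N : ℕ} (s : Fin N → Bool) : (Fin N → Bool) → ℂ :=
  Pi.single s 1

/-- The GHZ state `ψ_d^(1) = (|0⋯0⟩ + |1⋯1⟩)/√2`. -/
noncomputable def ghz1 (N : ℕ) : (Fin N → Bool) → ℂ :=
  ((Real.sqrt 2 : ℂ))⁻¹ • (e (fun _ => false) + e (fun _ => true))

/-- The GHZ state `ψ_d^(2) = (|0⋯0⟩ − |1⋯1⟩)/√2`. -/
noncomputable def ghz2 (N : ℕ) : (Fin N → Bool) → ℂ :=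
  ((Real.sqrt 2 : ℂ))⁻¹ • (e (fun _ => false) - e (fun _ => true))

def spin (b : Bool) : ℤ := if b = false then 1 else -1

lemma spin_mul_spin_le_one (a b : Bool) : spin a * spin b ≤ 1 := by
  cases a <;> cases b <;> decide

lemma spin_mul_spin_eq_one_iff {a b : Bool} : spin a * spin b = 1 ↔ a = b := by
  cases a <;> cases b <;> decide

def isingEnergy (N : ℕ) (s : Fin N → Bool) : ℤ :=
  ∑ n ∈ (Finset.range (N - 1)).attach,
    spin (s ⟨n.1, by have := Finset.mem_range.mp n.2; omega⟩) *
    spin (s ⟨n.1 + 1, by have := Finset.mem_range.mp n.2; omega⟩)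

lemma isingH0_eq_diagonal (N : ℕ) : IsingH0 N = diagonal fun s => (isingEnergy N s : ℂ) := by
  have hZ : ∀ n, Zop N n = diagonal fun s => (spin (s n) : ℂ) := by
    intro n
    simp only [Zop, spin]
    push_cast
    rfl
  simp only [IsingH0, isingEnergy, hZ, diagonal_mul_diagonal]
  ext s t
  by_cases hst : s = t <;> simp [Matrix.sum_apply, hst]

lemma eq_const_of_adjacent_eq {α : Type*} {N : ℕ} (s : Fin N → α)
    (h : ∀ n (hn : n + 1 < N), s ⟨n, Nat.lt_of_succ_lt hn⟩ = s ⟨n + 1, hn⟩) (i : Fin N) :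
    s = fun _ => s i := by
  have h0 : ∀ j : Fin N, s j = s ⟨0, j.pos⟩ := by
    rintro ⟨j, hj⟩
    induction j with
    | zero => rfl
    | succ k ih => rw [← h k hj, ih]
  funext j
  rw [h0 i, h0 j]

lemma isingEnergy_eq_iff {N : ℕ} {s : Fin N → Bool} :
    isingEnergy N s = (N - 1 : ℕ) ↔ s = (fun _ => false) ∨ s = (fun _ => true) := by
  have hcard : ((N - 1 : ℕ) : ℤ) = ∑ _n ∈ (Finset.range (N - 1)).attach, 1 := by simp
  rw [isingEnergy, hcard, Finset.sum_eq_sum_iff_of_le fun _ _ => spin_mul_spin_le_one _ _]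
  simp only [Finset.mem_attach, true_implies, spin_mul_spin_eq_one_iff, Subtype.forall,
    Finset.mem_range]
  constructor
  · intro h
    rcases Nat.eq_zero_or_pos N with rfl | hN
    · exact .inl (Subsingleton.elim _ _)
    have hs := eq_const_of_adjacent_eq s (fun n hn => h n (by omega)) ⟨0, hN⟩
    cases h0 : s ⟨0, hN⟩ <;> rw [h0] at hs <;> simp [hs]
  · rintro (rfl | rfl) <;> simp

lemma diagonal_mulVec_eq_smul_iff {ι R : Type*} [Fintype ι] [DecidableEq ι] [CommRing R]
    [NoZeroDivisors R] {d v : ι → R} {c : R} :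
    diagonal d *ᵥ v = c • v ↔ ∀ i, d i ≠ c → v i = 0 := by
  simp only [funext_iff, mulVec_diagonal, Pi.smul_apply, smul_eq_mul]
  refine forall_congr' fun i => ⟨fun h hd => ?_, fun h => ?_⟩
  · exact (mul_eq_zero.mp (by linear_combination h : (d i - c) * v i = 0)).resolve_left
      (sub_ne_zero.mpr hd)
  · by_cases hd : d i = c
    · rw [hd]
    · rw [h hd, mul_zero, mul_zero]

lemma isingH0_mulVec_eq_smul_iff {N : ℕ} (hN : 0 < N) {v : (Fin N → Bool) → ℂ} :
    IsingH0 N *ᵥ v = ((N : ℂ) - 1) • v ↔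
      ∀ s, s ≠ (fun _ => false) → s ≠ (fun _ => true) → v s = 0 := by
  have hN1 : (N : ℂ) - 1 = ((N - 1 : ℕ) : ℤ) := by push_cast [Nat.cast_sub hN]; ring
  rw [isingH0_eq_diagonal, hN1, diagonal_mulVec_eq_smul_iff]
  refine forall_congr' fun s => ?_
  rw [Ne, Int.cast_inj, isingEnergy_eq_iff, not_or, and_imp]

lemma parityM_mulVec_apply {N : ℕ} (v : (Fin N → Bool) → ℂ) (s : Fin N → Bool) :
    (parityM N *ᵥ v) s = v fun n => !s n := by
  simp [parityM, mulVec, dotProduct, ite_mul]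

lemma parityM_mulVec_eq_smul_iff {N : ℕ} {v : (Fin N → Bool) → ℂ} {σ : ℂ} :
    parityM N *ᵥ v = σ • v ↔ ∀ s, v (fun n => !s n) = σ * v s := by
  simp only [funext_iff, parityM_mulVec_apply, Pi.smul_apply, smul_eq_mul]

lemma const_false_ne_const_true {N : ℕ} (hN : 0 < N) : (fun _ : Fin N => false) ≠ fun _ => true :=
  fun h => Bool.false_ne_true (congrFun h ⟨0, hN⟩)

lemma not_comp_eq_const_iff {ι : Type*} {s : ι → Bool} {b : Bool} :
    ((fun i => !s i) = fun _ => b) ↔ s = fun _ => !b := by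
  simp [funext_iff, Bool.not_eq_eq_eq_not]

lemma parity_sector_eq_span {N : ℕ} (hN : 0 < N) {σ : ℂ} (hσ : σ * σ = 1) :
    {v : (Fin N → Bool) → ℂ | IsingH0 N *ᵥ v = ((N : ℂ) - 1) • v ∧ parityM N *ᵥ v = σ • v} =
      (Submodule.span ℂ {e (N := N) (fun _ => false) + σ • e fun _ => true} :
        Set ((Fin N → Bool) → ℂ)) := by
  have hne := const_false_ne_const_true hN
  ext v
  simp only [Set.mem_ofPred_eq, SetLike.mem_coe, Submodule.mem_span_singleton,
    isingH0_mulVec_eq_smul_iff hN, parityM_mulVec_eq_smul_iff]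
  constructor
  · rintro ⟨hsupp, hflip⟩
    have hv : v = Pi.single (fun _ => false) (v fun _ => false) +
        Pi.single (fun _ => true) (v fun _ => true) := by
      conv_lhs => rw [← Finset.univ_sum_single v]
      exact Fintype.sum_eq_add _ _ hne fun s ⟨h0, h1⟩ => by rw [hsupp s h0 h1, Pi.single_zero]
    have h1 : v (fun _ => true) = σ * v (fun _ => false) := hflip fun _ => false
    refine ⟨v fun _ => false, ?_⟩
    conv_rhs => rw [hv, h1]
    simp only [e, smul_add, ← Pi.single_smul, smul_eq_mul, mul_one, one_mul, mul_comm σ]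
  · rintro ⟨a, rfl⟩
    refine ⟨fun s h0 h1 => by simp [e, h0, h1], fun s => ?_⟩
    simp only [e, Pi.smul_apply, Pi.add_apply, Pi.single_apply, not_comp_eq_const_iff,
      Bool.not_false, Bool.not_true, smul_eq_mul]
    by_cases h0 : s = fun _ => false
    · simp [h0, hne, mul_comm]
    by_cases h1 : s = fun _ => true
    · simp [h1, hne.symm]
      linear_combination -a * hσ
    · simp [h0, h1]

/-- For every `N ≥ 2`, the intersection of the top eigenspace of `H0` (eigenvalue `N − 1`)
with the `+1`-eigenspace of the parity operator `M` is the one-dimensional span of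
`ψ_d^(1)`, and its intersection with the `−1`-eigenspace of `M` is the one-dimensional
span of `ψ_d^(2)`. -/
theorem ghz_unique_in_parity_sector (N : ℕ) (hN : 2 ≤ N) :
    ({v : (Fin N → Bool) → ℂ |
        (IsingH0 N).mulVec v = ((N : ℂ) - 1) • v ∧ (parityM N).mulVec v = v} =
      (Submodule.span ℂ ({ghz1 N} : Set ((Fin N → Bool) → ℂ)) :
        Set ((Fin N → Bool) → ℂ))) ∧
    ({v : (Fin N → Bool) → ℂ |
        (IsingH0 N).mulVec v = ((N : ℂ) - 1) • v ∧ (parityM N).mulVec v = -v} =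
      (Submodule.span ℂ ({ghz2 N} : Set ((Fin N → Bool) → ℂ)) :
        Set ((Fin N → Bool) → ℂ))) := by
  have hN0 : 0 < N := by omega
  have hnorm : IsUnit ((Real.sqrt 2 : ℂ))⁻¹ := by simp
  have hplus := parity_sector_eq_span hN0 (one_mul (1 : ℂ))
  have hminus := parity_sector_eq_span (σ := -1) hN0 (by norm_num)
  simp only [one_smul, neg_one_smul, ← sub_eq_add_neg] at hplus hminus
  rw [hplus, hminus, ghz1, ghz2, Submodule.span_singleton_smul_eq hnorm,
    Submodule.span_singleton_smul_eq hnorm]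
  exact ⟨rfl, rfl⟩
end

section
/- For every N ≥ 2, the dynamical Lie algebra of the globally controlled Ising chain is a proper subalgebra of u(2^N): the real Lie subalgebra of the 2^N × 2^N complex matrices generated by {Complex.I • H0, Complex.I • H1} is strictly contained in the real Lie algebra of skew-adjoint matrices, i.e., there exists a matrix A with Aᴴ = −A that does not belong to the generated Lie subalgebra. Hence the Ising chain with a single global control field is not controllable. -/
/-!
The global spin flip `s ↦ ¬s` commutes with every single-site flip and preserves each coupling
`s n = s (n + 1)`, so its permutation matrix, the parity operator `M`, commutes with `H0` and `H1`.
Since `i H0` and `i H1` are skew-adjoint, the generated Lie algebra lies in the Lie subalgebra of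
skew-adjoint matrices commuting with `M`. The skew-adjoint matrix `i E_{s s}` on a single basis
state `s` is not in it, because `M` moves `s`.
-/

open Matrix

attribute [local instance] LieRing.ofAssociativeRing

/-- `X n`: the Pauli-X (bit flip) operator acting on site `n`. -/
noncomputable def Xop (N : ℕ) (n : Fin N) : Matrix (Fin N → Bool) (Fin N → Bool) ℂ :=
  Matrix.of fun s t => if t = Function.update s n (!(s n)) then 1 else 0

/-- The global transverse-field Hamiltonian `H1 = ∑_n X_n`. -/
noncomputable def IsingH1 (N : ℕ) : Matrix (Fin N → Bool) (Fin N → Bool) ℂ :=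
  ∑ n : Fin N, Xop N n

/-- The dynamical Lie algebra `𝔏`: the real Lie subalgebra of the `2^N × 2^N` complex
matrices generated by `{i H0, i H1}`. -/
noncomputable def dynLieAlg (N : ℕ) :
    LieSubalgebra ℝ (Matrix (Fin N → Bool) (Fin N → Bool) ℂ) :=
  LieSubalgebra.lieSpan ℝ (Matrix (Fin N → Bool) (Fin N → Bool) ℂ)
    {Complex.I • IsingH0 N, Complex.I • IsingH1 N}

open Equiv Function

namespace skewAdjoint

variable (R A : Type*) [CommRing R] [StarRing R] [TrivialStar R] [Ring A] [StarRing A]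
  [Algebra R A] [StarModule R A]

def lieSubalgebra : LieSubalgebra R A where
  toSubmodule := { skewAdjoint A with smul_mem' := smul_mem }
  lie_mem' {a b} ha hb := by
    rw [AddSubgroup.mem_carrier, mem_iff] at ha hb ⊢
    rw [Ring.lie_def, star_sub, star_mul, star_mul, ha, hb]
    noncomm_ring

variable {R A} in
theorem mem_lieSubalgebra_iff {a : A} : a ∈ lieSubalgebra R A ↔ a ∈ skewAdjoint A :=
  Iff.rfl

end skewAdjoint

namespace Matrix

variable {n R : Type*} [DecidableEq n]

theorem isHermitian_permMatrix [Semiring R] [StarRing R] {σ : Perm n} (hσ : Involutive σ) :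
    (σ.permMatrix R).IsHermitian := by
  rw [IsHermitian, conjTranspose_permMatrix, inv_eq_of_mul_eq_one_right (Equiv.ext hσ)]

variable [Fintype n] [Semiring R]

theorem commute_permMatrix_iff (σ : Perm n) (A : Matrix n n R) :
    Commute (σ.permMatrix R) A ↔ A.submatrix σ σ = A := by
  rw [commute_iff_eq, PEquiv.toMatrix_toPEquiv_mul, PEquiv.mul_toMatrix_toPEquiv]
  constructor
  · intro h
    ext i j
    simpa using congr_fun₂ h i (σ j)
  · intro h
    ext i j
    conv_rhs => rw [← h]
    simp

theorem _root_.Commute.permMatrix {σ τ : Perm n} (h : Commute σ τ) :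
    Commute (σ.permMatrix R) (τ.permMatrix R) := by
  rw [commute_iff_eq, ← permMatrix_mul, ← permMatrix_mul, h.eq]

theorem not_commute_permMatrix_single {σ : Perm n} {i : n} (hi : σ i ≠ i) {c : R} (hc : c ≠ 0) :
    ¬ Commute (σ.permMatrix R) (single i i c) := by
  rw [commute_permMatrix_iff]
  intro h
  exact hc (by simpa [single_apply, hi.symm] using (congr_fun₂ h i i).symm)

end Matrix

section SpinFlip

variable {ι : Type*}

def flipAll : Perm (ι → Bool) where
  toFun s i := !s i
  invFun s i := !s i
  left_inv s := by simp
  right_inv s := by simp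

@[simp]
theorem flipAll_apply (s : ι → Bool) (i : ι) : flipAll s i = !s i :=
  rfl

theorem flipAll_ne [Nonempty ι] (s : ι → Bool) : flipAll s ≠ s := fun h => by
  obtain ⟨i⟩ := ‹Nonempty ι›
  simpa using congr_fun h i

variable [DecidableEq ι]

def flipAt (i : ι) : Perm (ι → Bool) where
  toFun s := update s i (!s i)
  invFun s := update s i (!s i)
  left_inv s := by simp
  right_inv s := by simp

@[simp]
theorem flipAt_apply (i : ι) (s : ι → Bool) : flipAt i s = update s i (!s i) :=
  rfl

theorem commute_flipAt_flipAll (i : ι) : Commute (flipAt i) (flipAll : Perm (ι → Bool)) := by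
  ext s j
  by_cases h : j = i
  · subst h; simp
  · simp [update_of_ne h]

end SpinFlip

section IsingChain

variable (N : ℕ)

noncomputable abbrev parity : Matrix (Fin N → Bool) (Fin N → Bool) ℂ :=
  flipAll.permMatrix ℂ

theorem Xop_eq_permMatrix (n : Fin N) : Xop N n = (flipAt n).permMatrix ℂ := by
  ext s t
  simp [Xop, PEquiv.toMatrix_apply, eq_comm]

theorem Zop_mul_Zop (a b : Fin N) :
    Zop N a * Zop N b = diagonal fun s => if s a = s b then 1 else -1 := by
  rw [Zop, Zop, diagonal_mul_diagonal]
  congr 1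
  funext s
  cases s a <;> cases s b <;> simp

theorem isSelfAdjoint_IsingH0 : IsSelfAdjoint (IsingH0 N) :=
  isSelfAdjoint_sum _ fun _ _ => by
    rw [Zop_mul_Zop]
    exact isHermitian_diagonal_iff.2 fun _ => by split_ifs <;> simp [isSelfAdjoint_iff]

theorem isSelfAdjoint_IsingH1 : IsSelfAdjoint (IsingH1 N) :=
  isSelfAdjoint_sum _ fun n _ => by
    rw [Xop_eq_permMatrix]
    exact isHermitian_permMatrix fun s => by simp

theorem commute_parity_IsingH0 : Commute (parity N) (IsingH0 N) :=
  Commute.sum_right _ _ _ fun _ _ => by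
    rw [Zop_mul_Zop, commute_permMatrix_iff, submatrix_diagonal_equiv]
    congr 1
    funext s
    simp

theorem commute_parity_IsingH1 : Commute (parity N) (IsingH1 N) :=
  Commute.sum_right _ _ _ fun n _ => by
    rw [Xop_eq_permMatrix]
    exact (commute_flipAt_flipAll n).symm.permMatrix

theorem dynLieAlg_le_skewAdjoint : dynLieAlg N ≤ skewAdjoint.lieSubalgebra ℝ _ := by
  rw [dynLieAlg, LieSubalgebra.lieSpan_le]
  rintro _ (rfl | rfl) <;>
    rw [SetLike.mem_coe, skewAdjoint.mem_lieSubalgebra_iff,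
      Complex.I_smul_mem_skewAdjoint_iff_isSelfAdjoint]
  · exact isSelfAdjoint_IsingH0 N
  · exact isSelfAdjoint_IsingH1 N

theorem dynLieAlg_le_centralizer_parity :
    dynLieAlg N ≤ lieSubalgebraOfSubalgebra ℝ _ (Subalgebra.centralizer ℝ {parity N}) := by
  rw [dynLieAlg, LieSubalgebra.lieSpan_le]
  rintro _ (rfl | rfl) <;> change _ ∈ Subalgebra.centralizer ℝ _ <;>
    simp only [Subalgebra.mem_centralizer_iff, Set.mem_singleton_iff, forall_eq]
  · exact (commute_parity_IsingH0 N).smul_right Complex.I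
  · exact (commute_parity_IsingH1 N).smul_right Complex.I

end IsingChain

/-- For every `N ≥ 2`, the dynamical Lie algebra of the globally controlled Ising chain
is a proper subalgebra of `u(2^N)`: every element is skew-adjoint, but there exists a
skew-adjoint matrix not in it.  Hence the Ising chain with a single global control field
is not controllable. -/
theorem dynLieAlg_proper_in_unitary_algebra (N : ℕ) (hN : 2 ≤ N) :
    (∀ A ∈ dynLieAlg N, Aᴴ = -A) ∧
    ∃ A : Matrix (Fin N → Bool) (Fin N → Bool) ℂ, Aᴴ = -A ∧ A ∉ dynLieAlg N := by
  have : Nonempty (Fin N) := ⟨⟨0, by omega⟩⟩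
  let s₀ : Fin N → Bool := fun _ => false
  refine ⟨fun A hA => dynLieAlg_le_skewAdjoint N hA, single s₀ s₀ Complex.I, ?_, fun hA => ?_⟩
  · rw [conjTranspose_single, Complex.star_def, Complex.conj_I, single_neg]
  · have hcomm : Commute (parity N) (single s₀ s₀ Complex.I) :=
      (Subalgebra.mem_centralizer_iff ℝ).1 (dynLieAlg_le_centralizer_parity N hA) _ rfl
    exact not_commute_permMatrix_single (flipAll_ne s₀) Complex.I_ne_zero hcomm
end
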